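/- Let A be a valuation ring with fraction field K, let B be the integral closure of A in a finite field extension L of K, and let 𝔪 be a maximal ideal of B. Then the localization B_𝔪 is a valuation ring (with fraction field L). -/

import Mathlib

/-!
Clearing denominators in a polynomial relation of `0 ≠ y ∈ L` over `K` and dividing by a
coefficient that divides all others (possible since `A` is a valuation ring) gives
`∑ cᵢ yⁱ = 0` with `cᵢ ∈ A` and some `cⱼ = 1`. The Horner tails
`uⱼ = ∑_{i ≥ j} cᵢ y^{i-j} = aeval y (divX^[j] p)` and `uⱼ y` lie in `A[y] ∩ A[y⁻¹]`, hence are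
integral over `A`, i.e. lie in `B`, and `cⱼ = uⱼ - uⱼ₊₁ y`. If neither `y` nor `y⁻¹` were in
`B_𝔪`, every `uⱼ` and `uⱼ y` would lie in `𝔪`, hence so would every `cⱼ`, including `1`.
-/

open Polynomial Algebra

theorem ValuationRing.exists_dvd_forall {A ι : Type*} [CommRing A] [IsDomain A] [ValuationRing A]
    (s : Finset ι) (hs : s.Nonempty) (f : ι → A) : ∃ j ∈ s, ∀ i ∈ s, f j ∣ f i := by
  classical
  obtain ⟨j, hj, hmax⟩ := s.exists_max_image (fun i => Ideal.span {f i}) hs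
  exact ⟨j, hj, fun i hi => Ideal.span_singleton_le_span_singleton.mp (hmax i hi)⟩

theorem ValuationRing.exists_aeval_eq_zero_and_coeff_eq_one {A L : Type*} [CommRing A] [IsDomain A]
    [ValuationRing A] [Field L] [Algebra A L] (hA : Function.Injective (algebraMap A L)) {y : L}
    (hy : IsAlgebraic A y) : ∃ p : A[X], aeval y p = 0 ∧ ∃ j, p.coeff j = 1 := by
  obtain ⟨Q, hQ0, hQy⟩ := hy
  obtain ⟨j, hj, hdvd⟩ := exists_dvd_forall Q.support (support_nonempty.mpr hQ0) Q.coeff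
  obtain ⟨p, hQp⟩ : C (Q.coeff j) ∣ Q := C_dvd_iff_dvd_coeff _ _ |>.mpr fun i =>
    if hi : i ∈ Q.support then hdvd i hi else by simp [notMem_support_iff.mp hi]
  have hd : Q.coeff j ≠ 0 := mem_support_iff.mp hj
  refine ⟨p, ?_, j, ?_⟩
  · rw [hQp, map_mul, aeval_C] at hQy
    exact (mul_eq_zero.mp hQy).resolve_left ((map_ne_zero_iff _ hA).mpr hd)
  · have hcoeff : Q.coeff j * p.coeff j = Q.coeff j := by rw [← coeff_C_mul, ← hQp]
    exact (mul_eq_left₀ hd).mp hcoeff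

theorem Polynomial.coeff_iterate_divX {R : Type*} [Semiring R] (p : R[X]) (j n : ℕ) :
    (divX^[j] p).coeff n = p.coeff (n + j) := by
  induction j generalizing n with
  | zero => rfl
  | succ j ih => rw [Function.iterate_succ_apply', coeff_divX, ih, add_assoc, add_comm 1 j]

section

variable {R L : Type*} [CommRing R] [Field L] [Algebra R L] {p : R[X]} {y : L}

theorem aeval_mul_zpow_mem_span_zpow (hy : y ≠ 0) {P : R[X]} {n : ℕ} (hP : P.natDegree ≤ n)
    (k : ℤ) : aeval y P * y ^ k ∈ Submodule.span R ((y ^ ·) '' Set.Icc k (k + n)) := by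
  rw [aeval_eq_sum_range' (Nat.lt_succ_of_le hP), Finset.sum_mul]
  refine Submodule.sum_mem _ fun i hi => ?_
  have hi : i ≤ n := Nat.lt_succ_iff.mp (Finset.mem_range.mp hi)
  rw [smul_mul_assoc, ← zpow_natCast, ← zpow_add₀ hy]
  exact Submodule.smul_mem _ _ (Submodule.subset_span ⟨_, ⟨by omega, by omega⟩, rfl⟩)

theorem aeval_inv_mul_zpow_mem_span_zpow (hy : y ≠ 0) {P : R[X]} {n : ℕ} (hP : P.natDegree ≤ n)
    (k : ℤ) : aeval y⁻¹ P * y ^ k ∈ Submodule.span R ((y ^ ·) '' Set.Icc (k - n) k) := by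
  rw [aeval_eq_sum_range' (Nat.lt_succ_of_le hP), Finset.sum_mul]
  refine Submodule.sum_mem _ fun i hi => ?_
  have hi : i ≤ n := Nat.lt_succ_iff.mp (Finset.mem_range.mp hi)
  rw [smul_mul_assoc, inv_pow, ← zpow_natCast, ← zpow_neg, ← zpow_add₀ hy]
  exact Submodule.smul_mem _ _ (Submodule.subset_span ⟨_, ⟨by omega, by omega⟩, rfl⟩)

theorem IsIntegral.of_mem_adjoin_of_mem_adjoin_inv (hy : y ≠ 0) {x : L}
    (hx : x ∈ adjoin R {y}) (hx' : x ∈ adjoin R {y⁻¹}) : IsIntegral R x := by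
  rw [adjoin_singleton_eq_range_aeval, AlgHom.mem_range] at hx hx'
  obtain ⟨P, rfl⟩ := hx
  obtain ⟨Q, hQ⟩ := hx'
  set n := max P.natDegree Q.natDegree
  let N := Submodule.span R ((y ^ ·) '' Set.Icc (-n : ℤ) n)
  have hwindow : ∀ {a b : ℤ}, -n ≤ a → b ≤ n →
      Submodule.span R ((y ^ ·) '' Set.Icc a b) ≤ N := fun ha hb =>
    Submodule.span_mono (Set.image_mono (Set.Icc_subset_Icc ha hb))
  have hN : N ≠ ⊥ := (Submodule.ne_bot_iff _).mpr
    ⟨1, Submodule.subset_span ⟨0, ⟨by omega, by omega⟩, zpow_zero y⟩, one_ne_zero⟩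
  refine isIntegral_of_smul_mem_submodule N hN (Submodule.fg_span ((Set.finite_Icc _ _).image _))
    _ fun m hm => ?_
  suffices N ≤ N.comap (LinearMap.mulLeft R (aeval y P)) from this hm
  rw [Submodule.span_le]
  rintro _ ⟨k, ⟨hk₁, hk₂⟩, rfl⟩
  rcases lt_or_ge k 0 with hk | hk
  · exact hwindow (by omega) (by omega)
      (aeval_mul_zpow_mem_span_zpow hy (le_max_left P.natDegree Q.natDegree) k)
  · rw [SetLike.mem_coe, Submodule.mem_comap, LinearMap.mulLeft_apply, ← hQ]
    exact hwindow (by omega) hk₂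
      (aeval_inv_mul_zpow_mem_span_zpow hy (le_max_right P.natDegree Q.natDegree) k)

theorem aeval_iterate_divX_succ_mul (p : R[X]) (y : L) (j : ℕ) :
    aeval y (divX^[j + 1] p) * y = aeval y (divX^[j] p) - algebraMap R L (p.coeff j) := by
  conv_rhs => rw [← divX_mul_X_add (divX^[j] p)]
  rw [Function.iterate_succ_apply', coeff_iterate_divX, zero_add, map_add, map_mul, aeval_X,
    aeval_C, add_sub_cancel_right]

theorem aeval_iterate_divX_mem_adjoin_inv (hy : y ≠ 0) (hp : aeval y p = 0) (j : ℕ) :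
    aeval y (divX^[j] p) ∈ adjoin R {y⁻¹} := by
  induction j with
  | zero => rw [Function.iterate_zero_apply, hp]; exact zero_mem _
  | succ j ih =>
    rw [← mul_inv_cancel_right₀ hy (aeval y _), aeval_iterate_divX_succ_mul]
    exact mul_mem (sub_mem ih (algebraMap_mem _ _)) (self_mem_adjoin_singleton R _)

theorem isIntegral_aeval_iterate_divX (hy : y ≠ 0) (hp : aeval y p = 0) (j : ℕ) :
    IsIntegral R (aeval y (divX^[j] p)) :=
  .of_mem_adjoin_of_mem_adjoin_inv hy (aeval_mem_adjoin_singleton R y)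
    (aeval_iterate_divX_mem_adjoin_inv hy hp j)

theorem isIntegral_aeval_iterate_divX_mul (hy : y ≠ 0) (hp : aeval y p = 0) :
    ∀ j, IsIntegral R (aeval y (divX^[j] p) * y)
  | 0 => by rw [Function.iterate_zero_apply, hp, zero_mul]; exact isIntegral_zero
  | j + 1 => by
    rw [aeval_iterate_divX_succ_mul]
    exact (isIntegral_aeval_iterate_divX hy hp j).sub isIntegral_algebraMap

theorem exists_mem_primeCompl_mul_mem_integralClosure_or_mul_inv_mem
    (𝔪 : Ideal (integralClosure R L)) [𝔪.IsPrime] (hy : y ≠ 0) (hp : aeval y p = 0) {j : ℕ}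
    (hj : algebraMap R (integralClosure R L) (p.coeff j) ∉ 𝔪) :
    ∃ s ∈ 𝔪.primeCompl,
      (s : L) * y ∈ integralClosure R L ∨ (s : L) * y⁻¹ ∈ integralClosure R L := by
  by_contra! h
  let u (i : ℕ) : integralClosure R L := ⟨_, isIntegral_aeval_iterate_divX hy hp i⟩
  let v (i : ℕ) : integralClosure R L := ⟨_, isIntegral_aeval_iterate_divX_mul hy hp i⟩
  have hu (i : ℕ) : u i ∈ 𝔪 := not_not.mp fun hi => (h (u i) hi).1 (v i).2
  have hv (i : ℕ) : v i ∈ 𝔪 := not_not.mp fun hi =>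
    (h (v i) hi).2 (by rw [mul_inv_cancel_right₀ hy]; exact (u i).2)
  have hcoeff : algebraMap R (integralClosure R L) (p.coeff j) = u j - v (j + 1) :=
    Subtype.ext (by
      change algebraMap R L _ = aeval y _ - aeval y (divX^[j + 1] p) * y
      rw [aeval_iterate_divX_succ_mul, sub_sub_cancel])
  exact hj (hcoeff ▸ sub_mem (hu j) (hv (j + 1)))

end

theorem Subalgebra.exists_dvd_or_dvd_of_forall_mul_mem_or_mul_inv_mem {R L : Type*} [CommRing R]
    [Field L] [Algebra R L] (S : Subalgebra R L) (M : Submonoid S)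
    (h : ∀ y : L, y ≠ 0 → ∃ s ∈ M, (s : L) * y ∈ S ∨ (s : L) * y⁻¹ ∈ S) (a b : S) :
    ∃ u ∈ M, a ∣ u * b ∨ b ∣ u * a := by
  rcases eq_or_ne a 0 with rfl | ha
  · exact ⟨1, M.one_mem, .inr (by simp)⟩
  rcases eq_or_ne b 0 with rfl | hb
  · exact ⟨1, M.one_mem, .inl (by simp)⟩
  have ha' : (a : L) ≠ 0 := by simpa using ha
  have hb' : (b : L) ≠ 0 := by simpa using hb
  obtain ⟨s, hs, hmem | hmem⟩ := h (b / a) (div_ne_zero hb' ha')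
  · exact ⟨s, hs, .inl ⟨⟨_, hmem⟩, Subtype.ext (by push_cast; field_simp)⟩⟩
  · exact ⟨s, hs, .inr ⟨⟨_, hmem⟩, Subtype.ext (by push_cast; field_simp)⟩⟩

theorem IsLocalization.preValuationRing_of_forall_exists_dvd_or_dvd {R S : Type*} [CommRing R]
    [CommRing S] [Algebra R S] (M : Submonoid R) [IsLocalization M S]
    (h : ∀ a b : R, ∃ u ∈ M, a ∣ u * b ∨ b ∣ u * a) : PreValuationRing S := by
  have hassoc : ∀ x : S, ∃ a : R, Associated x (algebraMap R S a) := fun x => by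
    obtain ⟨⟨a, s⟩, hx⟩ := IsLocalization.surj M x
    exact ⟨a, hx ▸ associated_mul_unit_right x _ (IsLocalization.map_units S s)⟩
  refine PreValuationRing.iff_dvd_total.mpr ⟨fun x y => ?_⟩
  obtain ⟨a, hxa⟩ := hassoc x
  obtain ⟨b, hyb⟩ := hassoc y
  obtain ⟨u, hu, hab | hba⟩ := h a b
  · left
    rw [hxa.dvd_iff_dvd_left, hyb.dvd_iff_dvd_right,
      ← (IsLocalization.map_units S ⟨u, hu⟩).dvd_mul_left, ← map_mul]
    exact map_dvd _ hab
  · right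
    rw [hyb.dvd_iff_dvd_left, hxa.dvd_iff_dvd_right,
      ← (IsLocalization.map_units S ⟨u, hu⟩).dvd_mul_left, ← map_mul]
    exact map_dvd _ hba

/-- Bourbaki, Alg. Comm. VI §8.6 Prop 6: if `A` is a valuation ring with fraction
field `K`, `L/K` a finite field extension, `B` the integral closure of `A` in `L`,
and `𝔪` a maximal ideal of `B`, then the localization `B_𝔪` is a valuation ring. -/
theorem localization_integralClosure_at_maximal_isValuationRing
    (A K L : Type*) [CommRing A] [IsDomain A] [ValuationRing A]
    [Field K] [Algebra A K] [IsFractionRing A K]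
    [Field L] [Algebra K L] [FiniteDimensional K L]
    [Algebra A L] [IsScalarTower A K L]
    (𝔪 : Ideal (integralClosure A L)) [𝔪.IsMaximal] :
    ValuationRing (Localization.AtPrime 𝔪) := by
  have hA : Function.Injective (algebraMap A L) := by
    rw [IsScalarTower.algebraMap_eq A K L]
    exact (algebraMap K L).injective.comp (IsFractionRing.injective A K)
  have hlocal (y : L) (hy : y ≠ 0) : ∃ s ∈ 𝔪.primeCompl,
      (s : L) * y ∈ integralClosure A L ∨ (s : L) * y⁻¹ ∈ integralClosure A L := by
    obtain ⟨p, hp, j, hj⟩ := ValuationRing.exists_aeval_eq_zero_and_coeff_eq_one hA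
      ((IsFractionRing.isAlgebraic_iff A K L).mpr (Algebra.IsAlgebraic.isAlgebraic y))
    refine exists_mem_primeCompl_mul_mem_integralClosure_or_mul_inv_mem 𝔪 hy hp (j := j) ?_
    rw [hj, map_one]
    exact (Ideal.ne_top_iff_one 𝔪).mp Ideal.IsPrime.ne_top'
  have : PreValuationRing (Localization.AtPrime 𝔪) :=
    IsLocalization.preValuationRing_of_forall_exists_dvd_or_dvd 𝔪.primeCompl
      ((integralClosure A L).exists_dvd_or_dvd_of_forall_mul_mem_or_mul_inv_mem _ hlocal)
  exact ⟨⟩
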